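/- The cycle graph C₄ on four vertices admits a Δ-disk representation, but C₄ is not an interval graph; hence the class of Δ-disk graphs strictly contains the class of interval graphs. -/

import Mathlib

/-- A Δ-disk representation of a simple graph `G`: each vertex `v` gets a
closed disk with center `c v = (x_v, y_v)`, `x_v > 0`, `y_v > 0`, and radius
`r v` with `max x_v y_v ≤ r v < √(x_v² + y_v²)` (the disk meets both axes but
misses the origin); distinct vertices are adjacent iff their disks intersect. -/
def IsDeltaDiskRep {V : Type*} (G : SimpleGraph V)
    (c : V → EuclideanSpace ℝ (Fin 2)) (r : V → ℝ) : Prop :=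
  (∀ v, 0 < c v 0) ∧ (∀ v, 0 < c v 1) ∧
  (∀ v, max (c v 0) (c v 1) ≤ r v) ∧ (∀ v, r v < dist (c v) 0) ∧
  ∀ u v, u ≠ v → (G.Adj u v ↔
    (Metric.closedBall (c u) (r u) ∩ Metric.closedBall (c v) (r v)).Nonempty)

/-- The cycle graph on four vertices, with vertex set `ZMod 4` and edges `i ~ i+1`. -/
def C4 : SimpleGraph (ZMod 4) where
  Adj i j := i - j = 1 ∨ j - i = 1
  symm := ⟨fun i j h => h.symm⟩
  loopless := ⟨by
    intro i h
    rcases h with h | h <;> rw [sub_self] at h <;> exact absurd h (by decide)⟩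

instance : DecidableRel C4.Adj := fun i j =>
  decidable_of_iff (i - j = 1 ∨ j - i = 1) Iff.rfl

/-- Auxiliary: points of the Euclidean plane. -/
noncomputable def diskPt (a b : ℝ) : EuclideanSpace ℝ (Fin 2) :=
  (WithLp.equiv 2 (Fin 2 → ℝ)).symm ![a, b]

lemma dist_diskPt (a b x y : ℝ) :
    dist (diskPt a b) (diskPt x y) = Real.sqrt ((a - x) ^ 2 + (b - y) ^ 2) := by
  rw [EuclideanSpace.dist_eq]
  simp [diskPt, Fin.sum_univ_two, Real.dist_eq, sq_abs]

lemma dist_diskPt_zero (a b : ℝ) :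
    dist (diskPt a b) 0 = Real.sqrt (a ^ 2 + b ^ 2) := by
  rw [dist_zero_right, EuclideanSpace.norm_eq]
  simp [diskPt, Fin.sum_univ_two, sq_abs]

lemma ball_inter_nonempty {E : Type*} [NormedAddCommGroup E] [NormedSpace ℝ E]
    (c₁ c₂ : E) (r₁ r₂ : ℝ) (h₁ : 0 ≤ r₁) (h₂ : 0 ≤ r₂) :
    (Metric.closedBall c₁ r₁ ∩ Metric.closedBall c₂ r₂).Nonempty ↔
      dist c₁ c₂ ≤ r₁ + r₂ := by
  constructor
  · rintro ⟨x, hx₁, hx₂⟩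
    rw [Metric.mem_closedBall] at hx₁ hx₂
    calc dist c₁ c₂ ≤ dist c₁ x + dist x c₂ := dist_triangle _ _ _
      _ ≤ r₁ + r₂ := add_le_add (by rwa [dist_comm]) hx₂
  · intro h
    rcases le_or_gt (dist c₁ c₂) r₁ with hd | hd
    · exact ⟨c₂, by simpa [Metric.mem_closedBall, dist_comm] using hd,
        Metric.mem_closedBall_self h₂⟩
    · have hdpos : 0 < dist c₁ c₂ := lt_of_le_of_lt h₁ hd
      set t : ℝ := r₁ / dist c₁ c₂ with ht
      have ht0 : 0 ≤ t := div_nonneg h₁ hdpos.le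
      have ht1 : t ≤ 1 := (div_le_one hdpos).mpr hd.le
      have e1 : dist (c₁ + t • (c₂ - c₁)) c₁ = r₁ := by
        rw [dist_eq_norm, add_sub_cancel_left, norm_smul, Real.norm_eq_abs,
          abs_of_nonneg ht0, ← dist_eq_norm', ht]
        field_simp
      have e2 : dist (c₁ + t • (c₂ - c₁)) c₂ = dist c₁ c₂ - r₁ := by
        rw [dist_eq_norm]
        have hpt : c₁ + t • (c₂ - c₁) - c₂ = (1 - t) • (c₁ - c₂) := by
          module
        rw [hpt, norm_smul, Real.norm_eq_abs, abs_of_nonneg (by linarith),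
          ← dist_eq_norm, ht]
        field_simp
      exact ⟨_, Metric.mem_closedBall.mpr e1.le,
        Metric.mem_closedBall.mpr (by rw [e2]; linarith)⟩

lemma pair_iff (a b r x y s : ℝ) (hr : 0 ≤ r) (hs : 0 ≤ s) :
    (Metric.closedBall (diskPt a b) r ∩ Metric.closedBall (diskPt x y) s).Nonempty ↔
      (a - x) ^ 2 + (b - y) ^ 2 ≤ (r + s) ^ 2 := by
  rw [ball_inter_nonempty _ _ _ _ hr hs, dist_diskPt,
    Real.sqrt_le_left (by linarith)]

lemma pair_yes (a b r x y s : ℝ) (hr : 0 ≤ r) (hs : 0 ≤ s)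
    (h : (a - x) ^ 2 + (b - y) ^ 2 ≤ (r + s) ^ 2) :
    (Metric.closedBall (diskPt a b) r ∩ Metric.closedBall (diskPt x y) s).Nonempty :=
  (pair_iff a b r x y s hr hs).mpr h

lemma pair_no (a b r x y s : ℝ) (hr : 0 ≤ r) (hs : 0 ≤ s)
    (h : ¬ ((a - x) ^ 2 + (b - y) ^ 2 ≤ (r + s) ^ 2)) :
    ¬ (Metric.closedBall (diskPt a b) r ∩ Metric.closedBall (diskPt x y) s).Nonempty :=
  fun hc => h ((pair_iff a b r x y s hr hs).mp hc)

lemma rad_lt (a b r : ℝ) (hr : 0 ≤ r) (h : r ^ 2 < a ^ 2 + b ^ 2) :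
    r < dist (diskPt a b) 0 := by
  rw [dist_diskPt_zero]
  exact (Real.lt_sqrt hr).mpr h

/-- `C₄` admits a Δ-disk representation, but `C₄` is not an interval graph
(it is not the intersection graph of any family of closed intervals on the
real line).  Hence Δ-disk graphs strictly generalize interval graphs. -/
theorem C4_deltaDisk_not_interval :
    (∃ (c : ZMod 4 → EuclideanSpace ℝ (Fin 2)) (r : ZMod 4 → ℝ),
      IsDeltaDiskRep C4 c r) ∧
    ¬ ∃ (l ρ : ZMod 4 → ℝ), (∀ v, l v ≤ ρ v) ∧
      ∀ u v : ZMod 4, u ≠ v → (C4.Adj u v ↔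
        (Set.Icc (l u) (ρ u) ∩ Set.Icc (l v) (ρ v)).Nonempty) := by
  constructor
  · refine ⟨![diskPt 480 140, diskPt 168 576, diskPt 23520 80640, diskPt 91008 26544],
      ![485, 594, 83160, 93852], ?_, ?_, ?_, ?_, ?_⟩
    · intro v
      fin_cases v
      · show (0:ℝ) < (480:ℝ); norm_num
      · show (0:ℝ) < (168:ℝ); norm_num
      · show (0:ℝ) < (23520:ℝ); norm_num
      · show (0:ℝ) < (91008:ℝ); norm_num
    · intro v
      fin_cases v
      · show (0:ℝ) < (140:ℝ); norm_num
      · show (0:ℝ) < (576:ℝ); norm_num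
      · show (0:ℝ) < (80640:ℝ); norm_num
      · show (0:ℝ) < (26544:ℝ); norm_num
    · intro v
      fin_cases v
      · show max (480:ℝ) 140 ≤ 485; norm_num
      · show max (168:ℝ) 576 ≤ 594; norm_num
      · show max (23520:ℝ) 80640 ≤ 83160; norm_num
      · show max (91008:ℝ) 26544 ≤ 93852; norm_num
    · intro v
      fin_cases v
      · exact rad_lt 480 140 485 (by norm_num) (by norm_num)
      · exact rad_lt 168 576 594 (by norm_num) (by norm_num)
      · exact rad_lt 23520 80640 83160 (by norm_num) (by norm_num)
      · exact rad_lt 91008 26544 93852 (by norm_num) (by norm_num)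
    · intro u v huv
      fin_cases u <;> fin_cases v
      · exact absurd rfl huv
      · exact iff_of_true (by simp only [C4]; decide)
          (pair_yes 480 140 485 168 576 594 (by norm_num) (by norm_num) (by norm_num))
      · exact iff_of_false (by simp only [C4]; decide)
          (pair_no 480 140 485 23520 80640 83160 (by norm_num) (by norm_num) (by norm_num))
      · exact iff_of_true (by simp only [C4]; decide)
          (pair_yes 480 140 485 91008 26544 93852 (by norm_num) (by norm_num) (by norm_num))
      · exact iff_of_true (by simp only [C4]; decide)
          (pair_yes 168 576 594 480 140 485 (by norm_num) (by norm_num) (by norm_num))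
      · exact absurd rfl huv
      · exact iff_of_true (by simp only [C4]; decide)
          (pair_yes 168 576 594 23520 80640 83160 (by norm_num) (by norm_num) (by norm_num))
      · exact iff_of_false (by simp only [C4]; decide)
          (pair_no 168 576 594 91008 26544 93852 (by norm_num) (by norm_num) (by norm_num))
      · exact iff_of_false (by simp only [C4]; decide)
          (pair_no 23520 80640 83160 480 140 485 (by norm_num) (by norm_num) (by norm_num))
      · exact iff_of_true (by simp only [C4]; decide)
          (pair_yes 23520 80640 83160 168 576 594 (by norm_num) (by norm_num) (by norm_num))
      · exact absurd rfl huv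
      · exact iff_of_true (by simp only [C4]; decide)
          (pair_yes 23520 80640 83160 91008 26544 93852 (by norm_num) (by norm_num) (by norm_num))
      · exact iff_of_true (by simp only [C4]; decide)
          (pair_yes 91008 26544 93852 480 140 485 (by norm_num) (by norm_num) (by norm_num))
      · exact iff_of_false (by simp only [C4]; decide)
          (pair_no 91008 26544 93852 168 576 594 (by norm_num) (by norm_num) (by norm_num))
      · exact iff_of_true (by simp only [C4]; decide)
          (pair_yes 91008 26544 93852 23520 80640 83160 (by norm_num) (by norm_num) (by norm_num))
      · exact absurd rfl huv
  · rintro ⟨l, ρ, hlρ, h⟩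
    have key : ∀ u v : ZMod 4, u ≠ v → (C4.Adj u v ↔
        max (l u) (l v) ≤ min (ρ u) (ρ v)) := fun u v huv => by
      rw [h u v huv, Set.Icc_inter_Icc, Set.nonempty_Icc]
    have h01 := (key 0 1 (by decide)).mp (by decide)
    have h12 := (key 1 2 (by decide)).mp (by decide)
    have h23 := (key 2 3 (by decide)).mp (by decide)
    have h03 := (key 0 3 (by decide)).mp (by decide)
    have h02 : ¬ max (l 0) (l 2) ≤ min (ρ 0) (ρ 2) :=
      fun hn => (by decide : ¬ C4.Adj 0 2) ((key 0 2 (by decide)).mpr hn)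
    have h13 : ¬ max (l 1) (l 3) ≤ min (ρ 1) (ρ 3) :=
      fun hn => (by decide : ¬ C4.Adj 1 3) ((key 1 3 (by decide)).mpr hn)
    simp only [max_le_iff, le_min_iff] at h01 h12 h23 h03
    rcases min_lt_iff.mp (not_le.mp h02) with h' | h' <;>
      rcases lt_max_iff.mp h' with hA | hA <;>
        rcases min_lt_iff.mp (not_le.mp h13) with h'' | h'' <;>
          rcases lt_max_iff.mp h'' with hB | hB <;>
            linarith [h01.1.1, h01.1.2, h01.2.1, h01.2.2,
              h12.1.1, h12.1.2, h12.2.1, h12.2.2,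
              h23.1.1, h23.1.2, h23.2.1, h23.2.2,
              h03.1.1, h03.1.2, h03.2.1, h03.2.2,
              hlρ 0, hlρ 1, hlρ 2, hlρ 3]
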